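/- arXiv:1701.05806 — 3 statements merged into one kernel-verified Lean document; each statement's English description precedes it below -/
import Mathlib

section
/- In GP(n,k) with n > 80 and 1 ≤ k < n/2, there exists an 8-cycle using exactly one outer edge, two spokes, and five inner edges if and only if 5k ≡ 1 (mod n) or 5k ≡ -1 (mod n). -/
open SimpleGraph

/-- The generalized Petersen graph `GP(n,k)`: vertices `Sum.inl i = uᵢ` (outer) and
`Sum.inr i = vᵢ` (inner), with edges `uᵢuᵢ₊₁`, `uᵢvᵢ`, `vᵢvᵢ₊ₖ` (indices mod `n`). -/
def GP (n k : ℕ) : SimpleGraph (ZMod n ⊕ ZMod n) :=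
  SimpleGraph.fromRel (fun a b => ∃ i : ZMod n,
    (a = Sum.inl i ∧ b = Sum.inl (i + 1)) ∨
    (a = Sum.inl i ∧ b = Sum.inr i) ∨
    (a = Sum.inr i ∧ b = Sum.inr (i + (k : ZMod n))))

/-- Outer-rim edges `uᵢuᵢ₊₁`. -/
def outerEdges (n : ℕ) : Set (Sym2 (ZMod n ⊕ ZMod n)) :=
  {e | ∃ i : ZMod n, e = s(Sum.inl i, Sum.inl (i + 1))}

/-- Spoke edges `uᵢvᵢ`. -/
def spokeEdges (n : ℕ) : Set (Sym2 (ZMod n ⊕ ZMod n)) :=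
  {e | ∃ i : ZMod n, e = s(Sum.inl i, Sum.inr i)}

/-- Inner-rim edges `vᵢvᵢ₊ₖ`. -/
def innerEdges (n k : ℕ) : Set (Sym2 (ZMod n ⊕ ZMod n)) :=
  {e | ∃ i : ZMod n, e = s(Sum.inr i, Sum.inr (i + (k : ZMod n)))}

/-- The subgraph of `G` spanned by the edges of `G` lying in the edge set `s`. -/
def edgeSubgraph {V : Type*} (G : SimpleGraph V) (s : Set (Sym2 V)) : G.Subgraph where
  verts := {v | ∃ e ∈ s ∩ G.edgeSet, v ∈ e}
  Adj a b := G.Adj a b ∧ s(a, b) ∈ s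
  adj_sub h := h.1
  edge_vert {a b} h := ⟨s(a, b), ⟨h.2, (SimpleGraph.mem_edgeSet G).mpr h.1⟩, Sym2.mem_mk_left _ _⟩
  symm := ⟨fun a b h => ⟨h.1.symm, by rw [Sym2.eq_swap]; exact h.2⟩⟩

/-- `C` is a cycle (subgraph) of length `m`: it has `m` vertices, `m` edges, is connected,
and every one of its vertices has exactly two neighbours in it. -/
def IsNCycle {V : Type*} {G : SimpleGraph V} (m : ℕ) (C : G.Subgraph) : Prop :=
  C.verts.ncard = m ∧ C.edgeSet.ncard = m ∧ C.Connected ∧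
    ∀ v ∈ C.verts, (C.neighborSet v).ncard = 2

/-- `sigma8 G e` is the number of 8-cycles of `G` containing the edge `e`. -/
noncomputable def sigma8 {V : Type*} (G : SimpleGraph V) (e : Sym2 V) : ℕ :=
  {C : G.Subgraph | IsNCycle 8 C ∧ e ∈ C.edgeSet}.ncard

/-!
Let `C` be an 8-cycle whose only outer edge is `u_a u_{a+1}`. An outer vertex `u_x` with
`x ∉ {a, a+1}` has at most one neighbour in `C`, so it is not on `C`; hence `u_a` and `u_{a+1}`
use their spokes, and every other inner vertex `v_x` of `C` has exactly the neighbours `v_{x±k}`.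
So from `v_a` the cycle is forced along `v_a, v_{a+d}, v_{a+2d}, …` with `d = ±k` until it first
meets `v_a` or `v_{a+1}`, say after `i` steps. Meeting `v_a` would force `2k ≡ 0`. Meeting
`v_{a+1}`, the `i + 3` distinct vertices met so far are closed under adjacency in the connected
`C`, so they are all of `C`: `i = 5` and `5d ≡ 1`. Conversely, if `5k ≡ ±1` then `k` is a unit,
so `u_0, v_0, v_k, …, v_{5k}, u_{5k}` are distinct and form such a cycle.
-/

open Sum

theorem ZMod.natCast_ne_zero_of_pos_of_lt {n m : ℕ} (h0 : 0 < m) (h : m < n) :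
    (m : ZMod n) ≠ 0 := by
  rw [Ne, ZMod.natCast_eq_zero_iff]
  exact fun hd => absurd (Nat.le_of_dvd h0 hd) (by omega)

theorem ncard_setOf_mem_of_nodup {α : Type*} {l : List α} (hl : l.Nodup) :
    {x | x ∈ l}.ncard = l.length := by
  classical
  rw [← List.toFinset_card_of_nodup hl, ← Set.ncard_coe_finset, List.coe_toFinset]

theorem ncard_setOf_mem_inter_of_nodup {α : Type*} {l : List α} (hl : l.Nodup) (s : Set α)
    [DecidablePred (· ∈ s)] : ({x | x ∈ l} ∩ s).ncard = l.countP (· ∈ s) := by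
  rw [List.countP_eq_length_filter, ← ncard_setOf_mem_of_nodup (hl.filter _)]
  congr 1
  ext
  simp

namespace SimpleGraph.Walk

variable {V : Type*} {G : SimpleGraph V} {u : V}

theorem IsCycle.isNCycle_toSubgraph {p : G.Walk u u} (hp : p.IsCycle) :
    IsNCycle p.length p.toSubgraph := by
  refine ⟨?_, ?_, p.toSubgraph_connected,
    fun v hv => hp.ncard_neighborSet_toSubgraph_eq_two (p.mem_verts_toSubgraph.mp hv)⟩
  · have hsupp : {w | w ∈ p.support} = {w | w ∈ p.support.tail} := by
      ext w
      change w ∈ p.support ↔ w ∈ p.support.tail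
      rw [mem_support_iff]
      exact ⟨by rintro (rfl | h); exacts [end_mem_tail_support hp.not_nil, h], Or.inr⟩
    rw [verts_toSubgraph, hsupp, ncard_setOf_mem_of_nodup hp.support_nodup, List.length_tail,
      length_support, Nat.add_sub_cancel]
  · rw [edgeSet_toSubgraph, edgeSet, ncard_setOf_mem_of_nodup hp.edges_nodup, length_edges]

end SimpleGraph.Walk

theorem eq_pair_of_subset_of_ncard_eq_two {α : Type*} {s : Set α} {x y : α} (h : s ⊆ {x, y})
    (hs : s.ncard = 2) : s = {x, y} :=
  Set.eq_of_subset_of_ncard_le h (hs ▸ (Set.ncard_insert_le _ _).trans (by simp))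

theorem eq_pair_of_mem_of_ncard_eq_two {α : Type*} {s : Set α} {x y : α} (hx : x ∈ s)
    (hy : y ∈ s) (hxy : x ≠ y) (hs : s.ncard = 2) : s = {x, y} :=
  (Set.eq_of_subset_of_ncard_le (Set.insert_subset hx (Set.singleton_subset_iff.mpr hy))
    (by rw [hs, Set.ncard_pair hxy]) (Set.finite_of_ncard_pos (by omega))).symm

theorem SimpleGraph.Subgraph.Connected.verts_subset_of_adj_mem {V : Type*} {G : SimpleGraph V}
    {C : G.Subgraph} (hC : C.Connected) {Q : Set V} {x : V} (hx : x ∈ C.verts) (hxQ : x ∈ Q)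
    (hQ : ∀ y z, y ∈ Q → C.Adj y z → z ∈ Q) : C.verts ⊆ Q := by
  intro y hy
  obtain ⟨p⟩ := hC.preconnected ⟨x, hx⟩ ⟨y, hy⟩
  suffices ∀ (u v : C.verts) (p : C.coe.Walk u v), (u : V) ∈ Q → (v : V) ∈ Q from
    this _ _ p hxQ
  intro u v p
  induction p with
  | nil => exact id
  | cons h _ ih => exact fun hu => ih (hQ _ _ hu h)

namespace GP

variable {n k : ℕ}

theorem adj_spoke (x : ZMod n) : (GP n k).Adj (inl x) (inr x) :=
  (fromRel_adj _ _ _).mpr ⟨inl_ne_inr, .inl ⟨x, .inr (.inl ⟨rfl, rfl⟩)⟩⟩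

theorem adj_outer (h1 : (1 : ZMod n) ≠ 0) (x : ZMod n) : (GP n k).Adj (inl x) (inl (x + 1)) :=
  (fromRel_adj _ _ _).mpr ⟨by simpa using h1, .inl ⟨x, .inl ⟨rfl, rfl⟩⟩⟩

theorem adj_inner (hk : (k : ZMod n) ≠ 0) (x : ZMod n) : (GP n k).Adj (inr x) (inr (x + k)) :=
  (fromRel_adj _ _ _).mpr ⟨by simpa using hk, .inl ⟨x, .inr (.inr ⟨rfl, rfl⟩)⟩⟩

theorem eq_of_adj_inl {x : ZMod n} {z : ZMod n ⊕ ZMod n} (h : (GP n k).Adj (inl x) z) :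
    z = inl (x + 1) ∨ z = inl (x - 1) ∨ z = inr x := by
  rw [GP, fromRel_adj] at h
  obtain ⟨-, ⟨i, h | h | h⟩ | ⟨i, h | h | h⟩⟩ := h <;> simp_all [eq_sub_iff_add_eq]

theorem eq_of_adj_inr {x : ZMod n} {z : ZMod n ⊕ ZMod n} (h : (GP n k).Adj (inr x) z) :
    z = inl x ∨ z = inr (x + k) ∨ z = inr (x - k) := by
  rw [GP, fromRel_adj] at h
  obtain ⟨-, ⟨i, h | h | h⟩ | ⟨i, h | h | h⟩⟩ := h <;> simp_all [eq_sub_iff_add_eq]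

theorem mem_outerEdges_of_adj {x y : ZMod n} (h : (GP n k).Adj (inl x) (inl y)) :
    s(inl x, inl y) ∈ outerEdges n := by
  rw [GP, fromRel_adj] at h
  obtain ⟨-, ⟨i, h | h | h⟩ | ⟨i, h | h | h⟩⟩ := h <;>
    simp only [inl.injEq, reduceCtorEq, and_false] at h
  · exact ⟨i, by rw [h.1, h.2]⟩
  · exact ⟨i, by rw [h.1, h.2, Sym2.eq_swap]⟩

theorem natCast_mul_ne_zero_of_five_mul (hn : 5 < n)
    (h5 : 5 * (k : ZMod n) = 1 ∨ 5 * (k : ZMod n) = -1) {m : ℕ} (h0 : 0 < m) (hm : m ≤ 5) :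
    (m : ZMod n) * k ≠ 0 := by
  have hunit : IsUnit (k : ZMod n) := by
    rcases h5 with h | h
    · exact IsUnit.of_mul_eq_one 5 (by linear_combination h)
    · exact IsUnit.of_mul_eq_one (-5) (by linear_combination -h)
  rw [Ne, hunit.mul_left_eq_zero]
  exact ZMod.natCast_ne_zero_of_pos_of_lt h0 (by omega)

def walkFiveInner (hk : (k : ZMod n) ≠ 0)
    (hout : (GP n k).Adj (inl (0 + k + k + k + k + k)) (inl 0)) : (GP n k).Walk (inl 0) (inl 0) :=
  .cons (adj_spoke _) <| .cons (adj_inner hk _) <| .cons (adj_inner hk _) <|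
    .cons (adj_inner hk _) <| .cons (adj_inner hk _) <| .cons (adj_inner hk _) <|
    .cons (adj_spoke _).symm <| .cons hout .nil

theorem isCycle_walkFiveInner (hk : (k : ZMod n) ≠ 0)
    (hout : (GP n k).Adj (inl (0 + k + k + k + k + k)) (inl 0))
    (hmk : ∀ m : ℕ, 0 < m → m ≤ 5 → (m : ZMod n) * k ≠ 0) :
    (walkFiveInner hk hout).IsCycle := by
  have hk2 : 2 * (k : ZMod n) ≠ 0 := by simpa using hmk 2 two_pos (by norm_num)
  have hk3 : 3 * (k : ZMod n) ≠ 0 := by simpa using hmk 3 three_pos (by norm_num)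
  have hk4 : 4 * (k : ZMod n) ≠ 0 := by simpa using hmk 4 four_pos (by norm_num)
  have hk5 : 5 * (k : ZMod n) ≠ 0 := by simpa using hmk 5 (by norm_num) le_rfl
  rw [Walk.isCycle_iff_isPath_tail_and_le_length, Walk.isPath_def]
  simp only [walkFiveInner, Walk.getVert_cons_succ, Walk.tail_cons, Walk.support_copy,
    Walk.support_cons, Walk.support_nil, zero_add, List.nodup_cons, List.mem_cons, inr.injEq,
    inl.injEq, reduceCtorEq, List.not_mem_nil, or_self, or_false, not_or, left_eq_add,
    right_eq_add, add_left_inj, not_false_eq_true, List.nodup_nil, and_self, and_true, true_and,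
    Walk.length_cons, Walk.length_nil, Nat.reduceAdd, Nat.reduceLeDiff]
  and_intros
  all_goals grind

theorem ncard_edgeSet_walkFiveInner_inter (hk : (k : ZMod n) ≠ 0)
    (hout : (GP n k).Adj (inl (0 + k + k + k + k + k)) (inl 0))
    (hp : (walkFiveInner hk hout).IsCycle) :
    ((walkFiveInner hk hout).toSubgraph.edgeSet ∩ outerEdges n).ncard = 1 ∧
      ((walkFiveInner hk hout).toSubgraph.edgeSet ∩ spokeEdges n).ncard = 2 ∧
      ((walkFiveInner hk hout).toSubgraph.edgeSet ∩ innerEdges n k).ncard = 5 := by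
  classical
  have hinnerMem : ∀ x : ZMod n, s(inr x, inr (x + k)) ∈ innerEdges n k := fun x => ⟨x, rfl⟩
  refine ⟨?_, ?_, ?_⟩ <;>
    rw [Walk.edgeSet_toSubgraph, Walk.edgeSet, ncard_setOf_mem_inter_of_nodup hp.edges_nodup] <;>
    simp only [walkFiveInner, Walk.edges_cons, Walk.edges_nil, List.countP_cons, List.countP_nil,
      decide_eq_true_eq, if_pos (mem_outerEdges_of_adj hout), if_pos (hinnerMem _)]
  · simp [outerEdges]
  · simp [spokeEdges]
  · simp [innerEdges]

theorem exists_isNCycle_of_five_mul (hn : 5 < n)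
    (h5 : 5 * (k : ZMod n) = 1 ∨ 5 * (k : ZMod n) = -1) :
    ∃ C : (GP n k).Subgraph, IsNCycle 8 C ∧
        (C.edgeSet ∩ outerEdges n).ncard = 1 ∧
        (C.edgeSet ∩ spokeEdges n).ncard = 2 ∧
        (C.edgeSet ∩ innerEdges n k).ncard = 5 := by
  have h1 : (1 : ZMod n) ≠ 0 := by
    simpa using ZMod.natCast_ne_zero_of_pos_of_lt (n := n) one_pos (by omega)
  have hmk : ∀ m : ℕ, 0 < m → m ≤ 5 → (m : ZMod n) * k ≠ 0 :=
    fun _ => natCast_mul_ne_zero_of_five_mul hn h5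
  have hk : (k : ZMod n) ≠ 0 := by simpa using hmk 1 one_pos (by norm_num)
  have hout : (GP n k).Adj (inl (0 + k + k + k + k + k)) (inl 0) := by
    rw [show (0 : ZMod n) + k + k + k + k + k = 5 * k by ring]
    rcases h5 with h | h <;> rw [h]
    · simpa using (adj_outer h1 0).symm
    · simpa using adj_outer h1 (-1)
  have hp := isCycle_walkFiveInner hk hout hmk
  exact ⟨_, hp.isNCycle_toSubgraph, ncard_edgeSet_walkFiveInner_inter hk hout hp⟩

section OneOuterEdge

variable {C : (GP n k).Subgraph} {a d : ZMod n}

theorem exists_forall_adj_outer_iff_of_ncard_eq_one (h2 : (2 : ZMod n) ≠ 0)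
    (h : (C.edgeSet ∩ outerEdges n).ncard = 1) :
    ∃ a, ∀ x, C.Adj (inl x) (inl (x + 1)) ↔ x = a := by
  obtain ⟨e, he⟩ := Set.ncard_eq_one.mp h
  obtain ⟨heC, a, rfl⟩ : e ∈ C.edgeSet ∩ outerEdges n := he ▸ rfl
  refine ⟨a, fun x => ⟨fun hx => ?_, fun hx => hx ▸ heC⟩⟩
  have : s(inl x, inl (x + 1)) ∈ C.edgeSet ∩ outerEdges n := ⟨hx, x, rfl⟩
  simp only [he, Set.mem_singleton_iff, Sym2.eq_iff, inl.injEq] at this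
  rcases this with ⟨rfl, -⟩ | ⟨rfl, h'⟩
  · rfl
  · exact absurd (by linear_combination h') h2

theorem inl_notMem_verts (hdeg : ∀ v ∈ C.verts, (C.neighborSet v).ncard = 2)
    (hout : ∀ x, C.Adj (inl x) (inl (x + 1)) ↔ x = a) {x : ZMod n} (hxa : x ≠ a)
    (hxa' : x ≠ a + 1) : inl x ∉ C.verts := by
  intro hx
  have hsub : C.neighborSet (inl x) ⊆ {inr x} := by
    intro z hz
    rcases eq_of_adj_inl (C.adj_sub hz) with rfl | rfl | rfl
    · exact absurd ((hout x).1 hz) hxa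
    · have := (hout (x - 1)).1 (by rw [sub_add_cancel]; exact hz.symm)
      exact absurd (by rw [← this, sub_add_cancel]) hxa'
    · rfl
  have := Set.ncard_le_ncard hsub
  rw [hdeg _ hx, Set.ncard_singleton] at this
  omega

theorem neighborSet_inl (hdeg : ∀ v ∈ C.verts, (C.neighborSet v).ncard = 2)
    (hout : ∀ x, C.Adj (inl x) (inl (x + 1)) ↔ x = a) (h1 : (1 : ZMod n) ≠ 0) :
    C.neighborSet (inl a) = {inl (a + 1), inr a} := by
  refine eq_pair_of_subset_of_ncard_eq_two (fun z hz => ?_)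
    (hdeg _ (C.edge_vert ((hout a).2 rfl)))
  rcases eq_of_adj_inl (C.adj_sub hz) with rfl | rfl | rfl
  · exact .inl rfl
  · have := (hout (a - 1)).1 (by rw [sub_add_cancel]; exact hz.symm)
    exact absurd (by linear_combination -this) h1
  · exact .inr rfl

theorem neighborSet_inl_add_one (hdeg : ∀ v ∈ C.verts, (C.neighborSet v).ncard = 2)
    (hout : ∀ x, C.Adj (inl x) (inl (x + 1)) ↔ x = a) (h1 : (1 : ZMod n) ≠ 0) :
    C.neighborSet (inl (a + 1)) = {inl a, inr (a + 1)} := by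
  refine eq_pair_of_subset_of_ncard_eq_two (fun z hz => ?_)
    (hdeg _ (C.edge_vert ((hout a).2 rfl).symm))
  rcases eq_of_adj_inl (C.adj_sub hz) with rfl | rfl | rfl
  · exact absurd (by linear_combination (hout (a + 1)).1 hz) h1
  · exact .inl (by rw [add_sub_cancel_right])
  · exact .inr rfl

theorem neighborSet_inr (hdeg : ∀ v ∈ C.verts, (C.neighborSet v).ncard = 2)
    (hout : ∀ x, C.Adj (inl x) (inl (x + 1)) ↔ x = a) {x : ZMod n} (hxa : x ≠ a)
    (hxa' : x ≠ a + 1) (hx : inr x ∈ C.verts) :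
    C.neighborSet (inr x) = {inr (x + k), inr (x - k)} := by
  refine eq_pair_of_subset_of_ncard_eq_two (fun z hz => ?_) (hdeg _ hx)
  rcases eq_of_adj_inr (C.adj_sub hz) with rfl | rfl | rfl
  · exact absurd (C.edge_vert (hz : C.Adj _ _).symm) (inl_notMem_verts hdeg hout hxa hxa')
  · exact .inl rfl
  · exact .inr rfl

theorem exists_neighborSet_inr (hdeg : ∀ v ∈ C.verts, (C.neighborSet v).ncard = 2)
    (hout : ∀ x, C.Adj (inl x) (inl (x + 1)) ↔ x = a) (h1 : (1 : ZMod n) ≠ 0) :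
    ∃ d : ZMod n, (d = k ∨ d = -k) ∧ C.neighborSet (inr a) = {inl a, inr (a + d)} := by
  have hspoke : inr a ∈ C.neighborSet (inl a) := by
    rw [neighborSet_inl hdeg hout h1]; exact .inr rfl
  have hdeg' := hdeg _ (C.edge_vert (hspoke : C.Adj _ _).symm)
  obtain ⟨z, hz, hza⟩ := Set.exists_ne_of_one_lt_ncard (by rw [hdeg']; norm_num) (inl a)
  have hdz : ∃ d : ZMod n, (d = k ∨ d = -k) ∧ z = inr (a + d) := by
    rcases eq_of_adj_inr (C.adj_sub hz) with rfl | rfl | rfl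
    · exact absurd rfl hza
    · exact ⟨k, .inl rfl, rfl⟩
    · exact ⟨-k, .inr rfl, by rw [sub_eq_add_neg]⟩
  obtain ⟨d, hd, rfl⟩ := hdz
  exact ⟨d, hd, eq_pair_of_mem_of_ncard_eq_two (hspoke : C.Adj _ _).symm hz hza.symm hdeg'⟩

theorem neighborSet_inr_of_eq_or_eq_neg (hdeg : ∀ v ∈ C.verts, (C.neighborSet v).ncard = 2)
    (hout : ∀ x, C.Adj (inl x) (inl (x + 1)) ↔ x = a) (hd : d = k ∨ d = -k) {x : ZMod n}
    (hxa : x ≠ a) (hxa' : x ≠ a + 1) (hx : inr x ∈ C.verts) :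
    C.neighborSet (inr x) = {inr (x + d), inr (x - d)} := by
  rw [neighborSet_inr hdeg hout hxa hxa' hx]
  rcases hd with rfl | rfl
  · rfl
  · rw [sub_neg_eq_add, ← sub_eq_add_neg, Set.pair_comm]

theorem adj_inr_add_mul_of_forall_ne (hdeg : ∀ v ∈ C.verts, (C.neighborSet v).ncard = 2)
    (hout : ∀ x, C.Adj (inl x) (inl (x + 1)) ↔ x = a) (hd : d = k ∨ d = -k)
    (hN : C.neighborSet (inr a) = {inl a, inr (a + d)}) {j : ℕ}
    (hfree : ∀ l : ℕ, 0 < l → l ≤ j → a + l * d ≠ a ∧ a + l * d ≠ a + 1) :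
    C.Adj (inr (a + j * d)) (inr (a + (j + 1 : ℕ) * d)) := by
  induction j with
  | zero =>
    have : inr (a + d) ∈ C.neighborSet (inr a) := hN ▸ .inr rfl
    simpa using this
  | succ j ih =>
    have hprev := ih fun l hl hlj => hfree l hl (by omega)
    obtain ⟨hxa, hxa'⟩ := hfree (j + 1) (by omega) le_rfl
    have hnext : a + ((j + 1 + 1 : ℕ) : ZMod n) * d = a + (j + 1 : ℕ) * d + d := by
      push_cast; ring
    have := neighborSet_inr_of_eq_or_eq_neg hdeg hout hd hxa hxa' (C.edge_vert hprev.symm)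
    rw [hnext, ← C.mem_neighborSet, this]
    exact .inl rfl

theorem add_mul_ne_self_of_forall_ne (hdeg : ∀ v ∈ C.verts, (C.neighborSet v).ncard = 2)
    (hout : ∀ x, C.Adj (inl x) (inl (x + 1)) ↔ x = a) (hd : d = k ∨ d = -k)
    (hN : C.neighborSet (inr a) = {inl a, inr (a + d)}) (h2k : 2 * (k : ZMod n) ≠ 0) {i : ℕ}
    (hi : 0 < i)
    (hfree : ∀ l : ℕ, 0 < l → l < i → a + l * d ≠ a ∧ a + l * d ≠ a + 1) :
    a + i * d ≠ a := by
  intro hia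
  obtain ⟨j, rfl⟩ : ∃ j, i = j + 1 := ⟨i - 1, by omega⟩
  have hadj := adj_inr_add_mul_of_forall_ne hdeg hout hd hN (j := j)
    fun l hl hlj => hfree l hl (by omega)
  rw [hia, C.adj_comm, ← C.mem_neighborSet, hN] at hadj
  have hj : a + j * d = a + d := by simpa using hadj
  push_cast at hia
  rcases hd with rfl | rfl
  · exact h2k (by linear_combination hia - hj)
  · exact h2k (by linear_combination hj - hia)

theorem injOn_add_mul_of_forall_ne (h1 : (1 : ZMod n) ≠ 0) {i : ℕ}
    (hfree : ∀ l : ℕ, 0 < l → l < i → a + l * d ≠ a ∧ a + l * d ≠ a + 1)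
    (hret : a + i * d = a + 1) : Set.InjOn (fun l : ℕ => a + l * d) (Set.Iic i) := by
  intro l hl l' hl' h
  simp only at h
  by_contra hne
  wlog hlt : l < l' generalizing l l'
  · exact this hl' hl h.symm (Ne.symm hne) (by omega)
  have hdiff : a + ((l' - l : ℕ) : ZMod n) * d = a := by
    rw [Nat.cast_sub hlt.le]; linear_combination -h
  rcases (by simp only [Set.mem_Iic] at hl'; omega : l' - l < i ∨ l' - l = i) with hlt' | heq
  · exact (hfree _ (by omega) hlt').1 hdiff
  · rw [heq, hret] at hdiff
    exact h1 (by linear_combination hdiff)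

theorem neighborSet_inr_add_one_of_return (hdeg : ∀ v ∈ C.verts, (C.neighborSet v).ncard = 2)
    (hout : ∀ x, C.Adj (inl x) (inl (x + 1)) ↔ x = a) (h1 : (1 : ZMod n) ≠ 0)
    (hd : d = k ∨ d = -k) (hN : C.neighborSet (inr a) = {inl a, inr (a + d)}) {i : ℕ}
    (hi : 0 < i) (hfree : ∀ l : ℕ, 0 < l → l < i → a + l * d ≠ a ∧ a + l * d ≠ a + 1)
    (hret : a + i * d = a + 1) :
    C.neighborSet (inr (a + 1)) = {inl (a + 1), inr (a + (i - 1 : ℕ) * d)} := by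
  have hspoke : C.Adj (inl (a + 1)) (inr (a + 1)) := by
    rw [← C.mem_neighborSet, neighborSet_inl_add_one hdeg hout h1]; exact .inr rfl
  have hlast := adj_inr_add_mul_of_forall_ne hdeg hout hd hN (j := i - 1)
    fun l hl hli => hfree l hl (by omega)
  rw [Nat.sub_add_cancel hi, hret] at hlast
  exact eq_pair_of_mem_of_ncard_eq_two hspoke.symm hlast.symm (by simp)
    (hdeg _ (C.edge_vert hspoke.symm))

theorem verts_subset_of_return (hdeg : ∀ v ∈ C.verts, (C.neighborSet v).ncard = 2)
    (hout : ∀ x, C.Adj (inl x) (inl (x + 1)) ↔ x = a) (h1 : (1 : ZMod n) ≠ 0)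
    (hd : d = k ∨ d = -k) (hN : C.neighborSet (inr a) = {inl a, inr (a + d)})
    (hconn : C.Connected) {i : ℕ} (hi : 0 < i)
    (hfree : ∀ l : ℕ, 0 < l → l < i → a + l * d ≠ a ∧ a + l * d ≠ a + 1)
    (hret : a + i * d = a + 1) :
    C.verts ⊆ {inl a, inl (a + 1)} ∪ (fun l : ℕ => inr (a + l * d)) '' Set.Iic i := by
  refine hconn.verts_subset_of_adj_mem (C.edge_vert ((hout a).2 rfl)) (.inl (.inl rfl)) ?_
  rintro y z ((rfl | rfl) | ⟨l, hl, rfl⟩) hyz <;> beta_reduce at hyz <;>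
    rw [← C.mem_neighborSet] at hyz
  · rw [neighborSet_inl hdeg hout h1] at hyz
    rcases hyz with rfl | rfl
    · exact .inl (.inr rfl)
    · exact .inr ⟨0, by simp, by simp⟩
  · rw [neighborSet_inl_add_one hdeg hout h1] at hyz
    rcases hyz with rfl | rfl
    · exact .inl (.inl rfl)
    · exact .inr ⟨i, Set.mem_Iic.mpr le_rfl, by simp [hret]⟩
  rcases Nat.eq_zero_or_pos l with rfl | hl0
  · rw [Nat.cast_zero, zero_mul, add_zero, hN] at hyz
    rcases hyz with rfl | rfl
    · exact .inl (.inl rfl)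
    · exact .inr ⟨1, hi, by simp⟩
  rcases (by simp only [Set.mem_Iic] at hl; omega : l < i ∨ l = i) with hli | rfl
  · obtain ⟨hxa, hxa'⟩ := hfree l hl0 hli
    rw [neighborSet_inr_of_eq_or_eq_neg hdeg hout hd hxa hxa' (C.edge_vert hyz)] at hyz
    rcases hyz with rfl | rfl
    · exact .inr ⟨l + 1, hli, by push_cast; ring_nf⟩
    · exact .inr ⟨l - 1, by simp only [Set.mem_Iic]; omega, by
        beta_reduce; rw [Nat.cast_pred hl0]; ring_nf⟩
  · rw [hret, neighborSet_inr_add_one_of_return hdeg hout h1 hd hN hl0 hfree hret] at hyz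
    rcases hyz with rfl | rfl
    · exact .inl (.inr rfl)
    · exact .inr ⟨l - 1, by simp only [Set.mem_Iic]; omega, rfl⟩

theorem subset_verts_of_forall_ne (hdeg : ∀ v ∈ C.verts, (C.neighborSet v).ncard = 2)
    (hout : ∀ x, C.Adj (inl x) (inl (x + 1)) ↔ x = a) (hd : d = k ∨ d = -k)
    (hN : C.neighborSet (inr a) = {inl a, inr (a + d)}) {i : ℕ}
    (hfree : ∀ l : ℕ, 0 < l → l < i → a + l * d ≠ a ∧ a + l * d ≠ a + 1) :
    {inl a, inl (a + 1)} ∪ (fun l : ℕ => inr (a + l * d)) '' Set.Iic i ⊆ C.verts := by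
  rintro y ((rfl | rfl) | ⟨l, hl, rfl⟩)
  · exact C.edge_vert ((hout a).2 rfl)
  · exact C.edge_vert ((hout a).2 rfl).symm
  rcases Nat.eq_zero_or_pos l with rfl | hl0
  · have : inl a ∈ C.neighborSet (inr a) := hN ▸ .inl rfl
    simpa using C.edge_vert this
  · have := adj_inr_add_mul_of_forall_ne hdeg hout hd hN (j := l - 1)
      fun l' hl' hl'l => hfree l' hl' (by simp only [Set.mem_Iic] at hl; omega)
    rw [Nat.sub_add_cancel hl0] at this
    exact C.edge_vert this.symm

theorem ncard_union_image_Iic (h1 : (1 : ZMod n) ≠ 0) {i : ℕ}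
    (hinj : Set.InjOn (fun l : ℕ => a + l * d) (Set.Iic i)) :
    ({inl a, inl (a + 1)} ∪ (fun l : ℕ => inr (a + l * d)) '' Set.Iic i).ncard = i + 3 := by
  have hdisj : Disjoint ({inl a, inl (a + 1)} : Set (ZMod n ⊕ ZMod n))
      ((fun l : ℕ => inr (a + l * d)) '' Set.Iic i) := by
    rw [Set.disjoint_left]
    rintro x (rfl | rfl) ⟨l, -, h⟩ <;> exact inr_ne_inl h
  rw [Set.ncard_union_eq hdisj, Set.ncard_pair (by simpa using h1),
    Set.InjOn.ncard_image (f := fun l : ℕ => inr (a + l * d)) (inr_injective.comp_injOn hinj),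
    Set.ncard_Iic_nat]
  ring

theorem five_mul_eq_one_or_neg_one_of_isNCycle [NeZero n] (h2 : (2 : ZMod n) ≠ 0)
    (h2k : 2 * (k : ZMod n) ≠ 0) (hC : IsNCycle 8 C)
    (h : (C.edgeSet ∩ outerEdges n).ncard = 1) :
    5 * (k : ZMod n) = 1 ∨ 5 * (k : ZMod n) = -1 := by
  have h1 : (1 : ZMod n) ≠ 0 := fun h1 => h2 (by linear_combination 2 * h1)
  obtain ⟨hv8, -, hconn, hdeg⟩ := hC
  obtain ⟨a, hout⟩ := exists_forall_adj_outer_iff_of_ncard_eq_one h2 h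
  obtain ⟨d, hd, hN⟩ := exists_neighborSet_inr hdeg hout h1
  classical
  have hex : ∃ i : ℕ, 0 < i ∧ (a + i * d = a ∨ a + i * d = a + 1) :=
    ⟨n, NeZero.pos n, .inl (by simp)⟩
  obtain ⟨hi, hret⟩ := Nat.find_spec hex
  have hfree :
      ∀ l : ℕ, 0 < l → l < Nat.find hex → a + l * d ≠ a ∧ a + l * d ≠ a + 1 :=
    fun l hl hli => not_or.mp fun h' => Nat.find_min hex hli ⟨hl, h'⟩
  set i := Nat.find hex
  replace hret := hret.resolve_left (add_mul_ne_self_of_forall_ne hdeg hout hd hN h2k hi hfree)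
  have hverts := (verts_subset_of_return hdeg hout h1 hd hN hconn hi hfree hret).antisymm
    (subset_verts_of_forall_ne hdeg hout hd hN hfree)
  have hi5 : i = 5 := by
    have := ncard_union_image_Iic h1 (injOn_add_mul_of_forall_ne h1 hfree hret)
    rw [← hverts, hv8] at this
    omega
  rw [hi5] at hret
  push_cast at hret
  rcases hd with rfl | rfl
  · exact .inl (by linear_combination hret)
  · exact .inr (by linear_combination -hret)

end OneOuterEdge

end GP

theorem gp_C1_iff (n k : ℕ) (hn : 80 < n) (hk1 : 1 ≤ k) (hk2 : 2 * k < n) :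
    (∃ C : (GP n k).Subgraph, IsNCycle 8 C ∧
        (C.edgeSet ∩ outerEdges n).ncard = 1 ∧
        (C.edgeSet ∩ spokeEdges n).ncard = 2 ∧
        (C.edgeSet ∩ innerEdges n k).ncard = 5) ↔
      ((5 * k : ℕ) : ZMod n) = 1 ∨ ((5 * k : ℕ) : ZMod n) = -1 := by
  have : NeZero n := ⟨by omega⟩
  have h2 : (2 : ZMod n) ≠ 0 := by
    simpa using ZMod.natCast_ne_zero_of_pos_of_lt (n := n) two_pos (by omega)
  have h2k : 2 * (k : ZMod n) ≠ 0 := by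
    simpa using ZMod.natCast_ne_zero_of_pos_of_lt (n := n) (m := 2 * k) (by omega) hk2
  push_cast
  constructor
  · rintro ⟨C, hC, hout, -, -⟩
    exact GP.five_mul_eq_one_or_neg_one_of_isNCycle h2 h2k hC hout
  · exact GP.exists_isNCycle_of_five_mul (by omega)
end

section
/- In GP(n,k) with n > 80 and 1 ≤ k < n/2, there exists an 8-cycle using exactly four outer edges, two spokes, and two inner edges if and only if k = 2 or k = (n-4)/2 (the latter requiring n even). -/
open SimpleGraph

/-!
Record a subgraph `C` of `GP(n,k)` by the index sets `T`, `S`, `I` of its outer edges, spokes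
and inner edges. If every vertex of `C` has even degree, counting the edges of `C` at `uₓ` and at
`vₓ` shows that `S` is the mod-2 boundary both of `T` (edges `{x, x + 1}`) and of `I` (edges
`{x, x + k}`). Two inner edges with a two-point boundary form a path `v_b v_{b+k} v_{b+2k}`, so
`S = {b, b + 2k}`; a set of outer edges whose boundary is `{a, c}` is one of the two arcs of the
rim between `a` and `c`, so its size is `±(c - a)`. With four outer edges this gives
`2k ≡ ±4 (mod n)`. Conversely, if `2k ≡ ±4` then `v_{±k}` is adjacent to both `v₀` and `v₄`, and
`u₀ u₁ u₂ u₃ u₄ v₄ v_{±k} v₀` is the required 8-cycle.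
-/

open Sum

namespace SimpleGraph

variable {V : Type*} {G : SimpleGraph V}

theorem Walk.IsCycle.isNCycle_toSubgraph_s10 {u : V} {p : G.Walk u u} (hp : p.IsCycle) :
    IsNCycle p.length p.toSubgraph := by
  classical
  refine ⟨?_, ?_, p.toSubgraph_connected, fun v hv =>
    hp.ncard_neighborSet_toSubgraph_eq_two (p.mem_verts_toSubgraph.mp hv)⟩
  · have hverts : p.toSubgraph.verts = ↑p.support.tail.toFinset := by
      ext v
      rw [Walk.mem_verts_toSubgraph, ← p.cons_tail_support, List.coe_toFinset, Set.mem_ofPred_eq,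
        List.mem_cons, List.tail_cons, or_iff_right_iff_imp]
      rintro rfl
      exact Walk.end_mem_tail_support hp.not_nil
    rw [hverts, Set.ncard_coe_finset, List.toFinset_card_of_nodup hp.support_nodup,
      List.length_tail, Walk.length_support, Nat.add_sub_cancel]
  · rw [Walk.edgeSet_toSubgraph, Walk.edgeSet, ← List.coe_toFinset, Set.ncard_coe_finset,
      List.toFinset_card_of_nodup hp.edges_nodup, Walk.length_edges]

theorem Walk.IsTrail.ncard_edgeSet_toSubgraph_inter {u v : V} {p : G.Walk u v} (hp : p.IsTrail)
    (A : Set (Sym2 V)) [DecidablePred (· ∈ A)] :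
    (p.toSubgraph.edgeSet ∩ A).ncard = p.darts.countP (fun d => d.edge ∈ A) := by
  classical
  have : p.toSubgraph.edgeSet ∩ A = ↑(p.edges.filter (· ∈ A)).toFinset := by
    ext e; simp [Walk.edgeSet_toSubgraph, Walk.edgeSet]
  rw [this, Set.ncard_coe_finset, List.toFinset_card_of_nodup (hp.edges_nodup.filter _),
    ← List.countP_eq_length_filter, Walk.edges, List.countP_map]
  rfl

theorem even_ncard_neighborSet_of_isNCycle {m : ℕ} {C : G.Subgraph} (hC : IsNCycle m C)
    (v : V) : Even (C.neighborSet v).ncard := by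
  by_cases hv : v ∈ C.verts
  · rw [hC.2.2.2 v hv]; exact even_two
  · have : C.neighborSet v = ∅ := Set.eq_empty_of_forall_notMem fun w hw => hv (C.edge_vert hw)
    rw [this, Set.ncard_empty]
    exact ⟨0, rfl⟩

end SimpleGraph

theorem Set.mem_iff_xor_of_subset_triple {α : Type*} {N : Set α} {p q r : α} (hpq : p ≠ q)
    (hpr : p ≠ r) (hqr : q ≠ r) (hN : N ⊆ {p, q, r}) (heven : Even N.ncard) :
    r ∈ N ↔ Xor (p ∈ N) (q ∈ N) := by
  classical
  have hN' : N = ↑(({p, q, r} : Finset α).filter (· ∈ N)) := by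
    ext x
    simp only [Finset.coe_filter, Finset.mem_insert, Finset.mem_singleton, Set.mem_ofPred_eq]
    exact ⟨fun h => ⟨by simpa using hN h, h⟩, And.right⟩
  rw [hN', Set.ncard_coe_finset, Finset.card_filter, Finset.sum_insert (by simp [hpq, hpr]),
    Finset.sum_insert (by simp [hqr]), Finset.sum_singleton] at heven
  by_cases hp : p ∈ N <;> by_cases hq : q ∈ N <;> by_cases hr : r ∈ N <;>
    simp [hp, hq, hr, Xor, Nat.even_iff] at heven ⊢

theorem Set.ncard_inter_range_of_injective {ι α : Type*} {f : ι → α} (hf : Function.Injective f)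
    (A : Set α) : (A ∩ Set.range f).ncard = (f ⁻¹' A).ncard := by
  rw [← Set.image_preimage_eq_inter_range, Set.ncard_image_of_injective _ hf]

theorem ZMod.natCast_eq_natCast_iff_of_lt {n i j : ℕ} (hi : i < n) (hj : j < n) :
    (i : ZMod n) = j ↔ i = j :=
  (CharP.natCast_injOn_Iio (ZMod n) n).eq_iff hi hj

theorem natCast_add_self_eq_four_or_iff {n k : ℕ} (hn : 4 < n) (hk : 2 * k < n) :
    ((k + k : ZMod n) = 4 ∨ (k + k : ZMod n) + 4 = 0) ↔ k = 2 ∨ (2 ∣ n ∧ k = (n - 4) / 2) := by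
  have hfour : (k + k : ZMod n) = 4 ↔ k + k = 4 := by
    exact_mod_cast ZMod.natCast_eq_natCast_iff_of_lt (i := k + k) (j := 4) (by omega) hn
  have hwrap : (k + k : ZMod n) + 4 = 0 ↔ k + k + 4 = n := by
    have := (ZMod.natCast_eq_zero_iff (k + k + 4) n).trans
      ⟨fun h => Nat.eq_of_dvd_of_lt_two_mul (by omega) h (by omega), fun h => h ▸ dvd_rfl⟩
    exact_mod_cast this
  rw [hfour, hwrap]
  omega

/-- The mod-2 boundary of the 1-chain formed by the segments `{x, x + d}` with `x ∈ E`. -/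
def stepBoundary {G : Type*} [AddGroup G] (d : G) (E : Set G) : Set G :=
  {x | Xor (x ∈ E) (x - d ∈ E)}

theorem exists_stepBoundary_eq_pair {G : Type*} [AddCommGroup G] {d : G} (hdd : d + d ≠ 0)
    {E : Set G} (hE : E.ncard = 2) (hB : (stepBoundary d E).ncard = 2) :
    ∃ b, stepBoundary d E = {b, b + d + d} := by
  obtain ⟨b, e, hbe, rfl⟩ := Set.ncard_eq_two.mp hE
  have hd : d ≠ 0 := by rintro rfl; simp at hdd
  have mem : ∀ x, x ∈ stepBoundary d {b, e} ↔ Xor (x = b ∨ x = e) (x = b + d ∨ x = e + d) := by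
    intro x
    simp only [stepBoundary, Set.mem_ofPred_eq, Set.mem_insert_iff, Set.mem_singleton_iff,
      sub_eq_iff_eq_add]
  by_cases heb : e = b + d
  · refine ⟨b, Set.ext fun x => ?_⟩
    rw [mem, heb]
    grind
  by_cases hbe' : b = e + d
  · refine ⟨e, Set.ext fun x => ?_⟩
    rw [mem, hbe', Set.mem_insert_iff, Set.mem_singleton_iff]
    grind
  -- otherwise the two segments are disjoint and all four endpoints lie on the boundary
  have hsub : ({b, e, b + d, e + d} : Set G) ⊆ stepBoundary d {b, e} := by
    intro x hx
    rw [mem]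
    simp only [Set.mem_insert_iff, Set.mem_singleton_iff] at hx
    grind
  have := Set.ncard_le_ncard hsub (Set.finite_of_ncard_ne_zero (by rw [hB]; norm_num))
  rw [hB, Set.ncard_insert_of_notMem, Set.ncard_insert_of_notMem, Set.ncard_pair] at this
  all_goals grind

theorem add_natCast_mem_iff_of_stepBoundary_one_eq_pair {n : ℕ} [NeZero n] {E : Set (ZMod n)}
    {a c : ZMod n} (hac : a ≠ c) (hB : stepBoundary 1 E = {a, c}) :
    ∀ i < n, (a + (i : ZMod n) ∈ E ↔ (a ∈ E ↔ i < (c - a).val)) := by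
  set j := (c - a).val
  have hj0 : 0 < j := ZMod.val_pos.mpr (sub_ne_zero.mpr hac.symm)
  have hflip : ∀ i : ℕ, i + 1 < n →
      (a + (i + 1 : ℕ) ∈ E ↔ (a + (i : ℕ) ∈ E ↔ i + 1 ≠ j)) := by
    intro i hi
    have hx := Set.ext_iff.mp hB (a + (i + 1 : ℕ))
    have hxa : a + ((i + 1 : ℕ) : ZMod n) ≠ a := by
      rw [Ne, add_eq_left, ← Nat.cast_zero, ZMod.natCast_eq_natCast_iff_of_lt hi (by omega)]
      omega
    have hxc : a + ((i + 1 : ℕ) : ZMod n) = c ↔ i + 1 = j := by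
      rw [← eq_sub_iff_add_eq', ← ZMod.natCast_zmod_val (c - a),
        ZMod.natCast_eq_natCast_iff_of_lt hi (ZMod.val_lt _)]
    have hprev : a + ((i + 1 : ℕ) : ZMod n) - 1 = a + i := by push_cast; ring
    rw [stepBoundary, Set.mem_ofPred_eq, hprev, Set.mem_insert_iff, Set.mem_singleton_iff,
      eq_false hxa, false_or, hxc] at hx
    rw [ne_eq, ← hx, Xor]
    tauto
  intro i
  induction i with
  | zero => simp [hj0]
  | succ i ih =>
    intro hi
    rw [hflip i hi, ih (by omega)]
    grind

theorem eq_add_ncard_of_stepBoundary_one_eq_pair {n : ℕ} [NeZero n] {E : Set (ZMod n)}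
    {a c : ZMod n} (hac : a ≠ c) (hB : stepBoundary 1 E = {a, c}) :
    c = a + E.ncard ∨ a = c + E.ncard := by
  have hlevel := add_natCast_mem_iff_of_stepBoundary_one_eq_pair hac hB
  set j := (c - a).val
  have himage : (fun x => (x - a).val) '' E = {i | i < n ∧ (a ∈ E ↔ i < j)} := by
    ext i
    simp only [Set.mem_image, Set.mem_ofPred_eq]
    constructor
    · rintro ⟨x, hx, rfl⟩
      refine ⟨ZMod.val_lt _, (hlevel _ (ZMod.val_lt _)).mp ?_⟩
      rwa [ZMod.natCast_zmod_val, add_sub_cancel]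
    · rintro ⟨hi, hE⟩
      exact ⟨a + i, (hlevel i hi).mpr hE, by rw [add_sub_cancel_left, ZMod.val_cast_of_lt hi]⟩
  have hinj : Function.Injective fun x : ZMod n => (x - a).val :=
    fun x y h => sub_left_injective (ZMod.val_injective n h)
  have hjn : j < n := ZMod.val_lt _
  rw [← Set.ncard_image_of_injective E hinj, himage]
  by_cases ha : a ∈ E
  · left
    have : {i | i < n ∧ (a ∈ E ↔ i < j)} = Set.Iio j := by
      ext i; simp only [ha, true_iff, Set.mem_ofPred_eq, Set.mem_Iio]; omega
    rw [this, Set.ncard_Iio_nat, ZMod.natCast_zmod_val]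
    abel
  · right
    have : {i | i < n ∧ (a ∈ E ↔ i < j)} = Set.Ico j n := by
      ext i; simp only [ha, false_iff, not_lt, Set.mem_ofPred_eq, Set.mem_Ico]; omega
    rw [this, Set.ncard_Ico_nat, Nat.cast_sub hjn.le, ZMod.natCast_self, ZMod.natCast_zmod_val]
    abel

namespace GP

variable {n k : ℕ}

theorem adj_inl_inl {x y : ZMod n} :
    (GP n k).Adj (inl x) (inl y) ↔ x ≠ y ∧ (y = x + 1 ∨ x = y + 1) := by
  simp [GP, fromRel_adj]

theorem adj_inl_inr {x y : ZMod n} : (GP n k).Adj (inl x) (inr y) ↔ x = y := by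
  simp [GP, fromRel_adj, eq_comm]

theorem adj_inr_inl {x y : ZMod n} : (GP n k).Adj (inr x) (inl y) ↔ x = y := by
  simp [GP, fromRel_adj]

theorem adj_inr_inr {x y : ZMod n} :
    (GP n k).Adj (inr x) (inr y) ↔ x ≠ y ∧ (y = x + k ∨ x = y + k) := by
  simp [GP, fromRel_adj]

theorem dart_edge_mem_outerEdges_iff (d : (GP n k).Dart) :
    d.edge ∈ outerEdges n ↔ d.fst.isLeft ∧ d.snd.isLeft := by
  obtain ⟨⟨x | x, y | y⟩, h⟩ := d <;>
    simp [outerEdges, adj_inl_inl, adj_inl_inr, adj_inr_inl, adj_inr_inr] at h ⊢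
  rcases h.2 with rfl | rfl
  exacts [⟨x, .inl ⟨rfl, rfl⟩⟩, ⟨y, .inr ⟨rfl, rfl⟩⟩]

theorem dart_edge_mem_spokeEdges_iff (d : (GP n k).Dart) :
    d.edge ∈ spokeEdges n ↔ d.fst.isLeft ≠ d.snd.isLeft := by
  obtain ⟨⟨x | x, y | y⟩, h⟩ := d <;>
    simp [spokeEdges, adj_inl_inl, adj_inl_inr, adj_inr_inl, adj_inr_inr] at h ⊢ <;>
    exact h.symm

theorem dart_edge_mem_innerEdges_iff (d : (GP n k).Dart) :
    d.edge ∈ innerEdges n k ↔ d.fst.isRight ∧ d.snd.isRight := by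
  obtain ⟨⟨x | x, y | y⟩, h⟩ := d <;>
    simp [innerEdges, adj_inl_inl, adj_inl_inr, adj_inr_inl, adj_inr_inr] at h ⊢
  rcases h.2 with rfl | rfl
  exacts [⟨x, .inl ⟨rfl, rfl⟩⟩, ⟨y, .inr ⟨rfl, rfl⟩⟩]

theorem exists_isNCycle_eight_of_inner_path (hn : 5 ≤ n) {m : ZMod n}
    (h0 : (GP n k).Adj (inr 0) (inr m)) (h4 : (GP n k).Adj (inr m) (inr 4)) :
    ∃ C : (GP n k).Subgraph, IsNCycle 8 C ∧
      (C.edgeSet ∩ outerEdges n).ncard = 4 ∧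
      (C.edgeSet ∩ spokeEdges n).ncard = 2 ∧
      (C.edgeSet ∩ innerEdges n k).ncard = 2 := by
  classical
  have hnd : [(0 : ZMod n), 1, 2, 3, 4].Nodup := by
    have := (List.nodup_range (n := 5)).map_on fun i hi j hj =>
      (ZMod.natCast_eq_natCast_iff_of_lt (n := n) (by rw [List.mem_range] at hi; omega)
        (by rw [List.mem_range] at hj; omega)).mp
    simpa [List.range_succ] using this
  simp only [List.nodup_cons, List.mem_cons, List.not_mem_nil, List.nodup_nil, not_or,
    not_false_eq_true, and_true] at hnd
  obtain ⟨⟨h01, h02, h03, h04⟩, ⟨h12, h13, h14⟩, ⟨h23, h24⟩, h34⟩ := hnd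
  have hm0 : m ≠ 0 := fun h => (GP n k).ne_of_adj h0 (by rw [h])
  have hm4 : m ≠ 4 := fun h => (GP n k).ne_of_adj h4 (by rw [h])
  let w : (GP n k).Walk (inl 0) (inl 0) :=
    .cons (adj_inl_inl.mpr ⟨h01, .inl (zero_add 1).symm⟩) <|
    .cons (adj_inl_inl.mpr ⟨h12, .inl one_add_one_eq_two.symm⟩) <|
    .cons (adj_inl_inl.mpr ⟨h23, .inl two_add_one_eq_three.symm⟩) <|
    .cons (adj_inl_inl.mpr ⟨h34, .inl three_add_one_eq_four.symm⟩) <|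
    .cons (adj_inl_inr.mpr rfl) <| .cons h4.symm <| .cons h0.symm <|
    .cons (adj_inr_inl.mpr rfl) .nil
  have hw : w.IsCycle := by
    rw [Walk.cons_isCycle_iff, Walk.isPath_def]
    simp_all [eq_comm]
  refine ⟨w.toSubgraph, hw.isNCycle_toSubgraph_s10, ?_, ?_, ?_⟩ <;>
    rw [hw.isTrail.ncard_edgeSet_toSubgraph_inter] <;>
    simp [w, dart_edge_mem_outerEdges_iff, dart_edge_mem_spokeEdges_iff,
      dart_edge_mem_innerEdges_iff]

theorem exists_isNCycle_eight_of_add_self_eq (hn : 5 ≤ n) (hkk : (k + k : ZMod n) ≠ 0)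
    (h : (k + k : ZMod n) = 4 ∨ (k + k : ZMod n) + 4 = 0) :
    ∃ C : (GP n k).Subgraph, IsNCycle 8 C ∧
      (C.edgeSet ∩ outerEdges n).ncard = 4 ∧
      (C.edgeSet ∩ spokeEdges n).ncard = 2 ∧
      (C.edgeSet ∩ innerEdges n k).ncard = 2 := by
  have h40 : (4 : ZMod n) ≠ 0 := by
    exact_mod_cast (ZMod.natCast_eq_zero_iff 4 n).not.mpr
      (Nat.not_dvd_of_pos_of_lt (by norm_num) (by omega))
  rcases h with h | h
  · exact exists_isNCycle_eight_of_inner_path (m := k) hn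
      (adj_inr_inr.mpr ⟨fun h' => hkk (by rw [← h', add_zero]), .inl (zero_add _).symm⟩)
      (adj_inr_inr.mpr ⟨fun h' => h40 (by linear_combination h - 2 * h'), .inl h.symm⟩)
  · exact exists_isNCycle_eight_of_inner_path (m := -k) hn
      (adj_inr_inr.mpr ⟨fun h' => hkk (by linear_combination 2 * h'), .inr (by ring)⟩)
      (adj_inr_inr.mpr ⟨fun h' => hkk (by linear_combination 2 * h' + 2 * h),
        .inr (by linear_combination -h)⟩)

def outerIndices (C : (GP n k).Subgraph) : Set (ZMod n) := {i | C.Adj (inl i) (inl (i + 1))}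

def spokeIndices (C : (GP n k).Subgraph) : Set (ZMod n) := {i | C.Adj (inl i) (inr i)}

def innerIndices (C : (GP n k).Subgraph) : Set (ZMod n) := {i | C.Adj (inr i) (inr (i + k))}

variable {C : (GP n k).Subgraph}

theorem ncard_edgeSet_inter_outerEdges (h2 : (2 : ZMod n) ≠ 0) :
    (C.edgeSet ∩ outerEdges n).ncard = (outerIndices C).ncard := by
  have hrange : outerEdges n = Set.range fun i : ZMod n => s(inl i, inl (i + 1)) := by
    ext; simp [outerEdges, eq_comm]
  rw [hrange, Set.ncard_inter_range_of_injective]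
  · rfl
  · intro i j h
    simp only [Sym2.eq_iff, inl.injEq] at h
    refine h.elim And.left fun ⟨hij, hji⟩ => absurd ?_ h2
    linear_combination hji - hij

theorem ncard_edgeSet_inter_spokeEdges :
    (C.edgeSet ∩ spokeEdges n).ncard = (spokeIndices C).ncard := by
  have hrange : spokeEdges n = Set.range fun i : ZMod n => s(inl i, inr i) := by
    ext; simp [spokeEdges, eq_comm]
  rw [hrange, Set.ncard_inter_range_of_injective]
  · rfl
  · intro i j h
    simpa using h

theorem ncard_edgeSet_inter_innerEdges (hkk : (k + k : ZMod n) ≠ 0) :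
    (C.edgeSet ∩ innerEdges n k).ncard = (innerIndices C).ncard := by
  have hrange : innerEdges n k = Set.range fun i : ZMod n => s(inr i, inr (i + k)) := by
    ext; simp [innerEdges, eq_comm]
  rw [hrange, Set.ncard_inter_range_of_injective]
  · rfl
  · intro i j h
    simp only [Sym2.eq_iff, inr.injEq] at h
    refine h.elim And.left fun ⟨hij, hji⟩ => absurd ?_ hkk
    linear_combination hji - hij

theorem spokeIndices_eq_stepBoundary_outerIndices (h2 : (2 : ZMod n) ≠ 0)
    (heven : ∀ v, Even (C.neighborSet v).ncard) :
    spokeIndices C = stepBoundary 1 (outerIndices C) := by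
  ext x
  have hsub : C.neighborSet (inl x) ⊆ {inl (x + 1), inl (x - 1), inr x} := by
    rintro (y | y) hy <;> have hadj := C.adj_sub hy
    · rcases (adj_inl_inl.mp hadj).2 with rfl | rfl <;> simp
    · simp [adj_inl_inr.mp hadj]
  have hne : (inl (x + 1) : ZMod n ⊕ ZMod n) ≠ inl (x - 1) := by
    rw [Ne, inl.injEq]; intro h; exact h2 (by linear_combination h)
  have hprev : inl (x - 1) ∈ C.neighborSet (inl x) ↔ x - 1 ∈ outerIndices C := by
    rw [Subgraph.mem_neighborSet, C.adj_comm, outerIndices, Set.mem_ofPred_eq, sub_add_cancel]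
  rw [stepBoundary, Set.mem_ofPred_eq, ← hprev]
  exact Set.mem_iff_xor_of_subset_triple hne inl_ne_inr inl_ne_inr hsub (heven (inl x))

theorem spokeIndices_eq_stepBoundary_innerIndices (hkk : (k + k : ZMod n) ≠ 0)
    (heven : ∀ v, Even (C.neighborSet v).ncard) :
    spokeIndices C = stepBoundary (k : ZMod n) (innerIndices C) := by
  ext x
  have hsub : C.neighborSet (inr x) ⊆ {inr (x + k), inr (x - k), inl x} := by
    rintro (y | y) hy <;> have hadj := C.adj_sub hy
    · simp [adj_inr_inl.mp hadj]
    · rcases (adj_inr_inr.mp hadj).2 with rfl | rfl <;> simp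
  have hne : (inr (x + k) : ZMod n ⊕ ZMod n) ≠ inr (x - k) := by
    rw [Ne, inr.injEq]; intro h; exact hkk (by linear_combination h)
  have hprev : inr (x - k) ∈ C.neighborSet (inr x) ↔ x - k ∈ innerIndices C := by
    rw [Subgraph.mem_neighborSet, C.adj_comm, innerIndices, Set.mem_ofPred_eq, sub_add_cancel]
  have hspoke : inl x ∈ C.neighborSet (inr x) ↔ x ∈ spokeIndices C := C.adj_comm _ _
  rw [stepBoundary, Set.mem_ofPred_eq, ← hprev, ← hspoke]
  exact Set.mem_iff_xor_of_subset_triple hne inr_ne_inl inr_ne_inl hsub (heven (inr x))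

theorem add_self_eq_or_of_even_degree [NeZero n] (h2 : (2 : ZMod n) ≠ 0)
    (hkk : (k + k : ZMod n) ≠ 0) (heven : ∀ v, Even (C.neighborSet v).ncard)
    (hsp : (C.edgeSet ∩ spokeEdges n).ncard = 2) (hin : (C.edgeSet ∩ innerEdges n k).ncard = 2) :
    (k + k : ZMod n) = (C.edgeSet ∩ outerEdges n).ncard ∨
      (k + k : ZMod n) + (C.edgeSet ∩ outerEdges n).ncard = 0 := by
  rw [ncard_edgeSet_inter_spokeEdges, spokeIndices_eq_stepBoundary_innerIndices hkk heven] at hsp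
  rw [ncard_edgeSet_inter_innerEdges hkk] at hin
  obtain ⟨b, hb⟩ := exists_stepBoundary_eq_pair hkk hin hsp
  rw [← spokeIndices_eq_stepBoundary_innerIndices hkk heven,
    spokeIndices_eq_stepBoundary_outerIndices h2 heven] at hb
  have hne : b ≠ b + k + k := fun h => hkk (by linear_combination -h)
  rw [ncard_edgeSet_inter_outerEdges h2]
  rcases eq_add_ncard_of_stepBoundary_one_eq_pair hne hb with h | h
  · left; linear_combination h
  · right; linear_combination -h

end GP

theorem gp_C4_iff (n k : ℕ) (hn : 80 < n) (hk1 : 1 ≤ k) (hk2 : 2 * k < n) :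
    (∃ C : (GP n k).Subgraph, IsNCycle 8 C ∧
        (C.edgeSet ∩ outerEdges n).ncard = 4 ∧
        (C.edgeSet ∩ spokeEdges n).ncard = 2 ∧
        (C.edgeSet ∩ innerEdges n k).ncard = 2) ↔
      (k = 2 ∨ (2 ∣ n ∧ k = (n - 4) / 2)) := by
  have : NeZero n := ⟨by omega⟩
  have h2 : (2 : ZMod n) ≠ 0 := by
    exact_mod_cast (ZMod.natCast_eq_zero_iff 2 n).not.mpr
      (Nat.not_dvd_of_pos_of_lt two_pos (by omega))
  have hkk : (k + k : ZMod n) ≠ 0 := by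
    exact_mod_cast (ZMod.natCast_eq_zero_iff (k + k) n).not.mpr
      (Nat.not_dvd_of_pos_of_lt (by omega) (by omega))
  rw [← natCast_add_self_eq_four_or_iff (by omega) hk2]
  refine ⟨fun ⟨C, hC, hout, hsp, hin⟩ => ?_, GP.exists_isNCycle_eight_of_add_self_eq (by omega) hkk⟩
  simpa [hout] using
    GP.add_self_eq_or_of_even_degree h2 hkk (even_ncard_neighborSet_of_isNCycle hC) hsp hin
end

section
/- For n > 80 and 1 ≤ k < n/2, at most one of the following conditions holds: (a) 8k ∈ {n, 3n}; (b) 5k ≡ ±1 (mod n); (c) 4k ≡ ±2 (mod n); (d) 3k ≡ ±3 (mod n); (e) 2k ≡ ±4 (mod n); (f) k = 5; (g) n = 2k+2. -/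
open SimpleGraph

/-! Since `2k < n`, every multiple `a k` with `a ≤ 5` is below `3n`, so each congruence
`a k ≡ ±c (mod n)` becomes one of finitely many linear equations `a k = ±c + q n` with
`q ∈ {0, 1, 2}`. Any two of the seven resulting linear conditions are then incompatible
for `n > 80`, which is Presburger arithmetic. -/

lemma eq_or_eq_add_or_eq_add_two_mul_of_mod_eq {n a c : ℕ} (h : a % n = c) (ha : a < 3 * n) :
    a = c ∨ a = c + n ∨ a = c + 2 * n := by
  have hq : a / n < 3 := Nat.div_lt_of_lt_mul (by rwa [mul_comm])
  have hdiv := Nat.div_add_mod a n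
  generalize a / n = q at hq hdiv
  interval_cases q <;> omega

/-- `a ≡ ±c (mod n)` written out over `ℕ`, valid when `c < n` and `a + c < 3 n`. -/
def PmModLift (n a c : ℕ) : Prop :=
  a = c ∨ a = c + n ∨ a = c + 2 * n ∨ a + c = n ∨ a + c = 2 * n

lemma pmModLift_of_natCast_eq_or_eq_neg {n a c : ℕ} (hc : c < n) (ha : a + c < 3 * n)
    (h : (a : ZMod n) = c ∨ (a : ZMod n) = -c) : PmModLift n a c := by
  unfold PmModLift
  rcases h with h | h
  · rw [ZMod.natCast_eq_natCast_iff'] at h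
    have := eq_or_eq_add_or_eq_add_two_mul_of_mod_eq (h.trans (Nat.mod_eq_of_lt hc)) (by omega)
    omega
  · have hsum : ((a + c : ℕ) : ZMod n) = ((0 : ℕ) : ZMod n) := by push_cast; rw [h]; ring
    rw [ZMod.natCast_eq_natCast_iff', Nat.zero_mod] at hsum
    have := eq_or_eq_add_or_eq_add_two_mul_of_mod_eq hsum ha
    omega

def gpCondition (n k : ℕ) : Fin 7 → Prop :=
  ![8 * k = n ∨ 8 * k = 3 * n,
    ((5 * k : ℕ) : ZMod n) = 1 ∨ ((5 * k : ℕ) : ZMod n) = -1,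
    ((4 * k : ℕ) : ZMod n) = 2 ∨ ((4 * k : ℕ) : ZMod n) = -2,
    ((3 * k : ℕ) : ZMod n) = 3 ∨ ((3 * k : ℕ) : ZMod n) = -3,
    ((2 * k : ℕ) : ZMod n) = 4 ∨ ((2 * k : ℕ) : ZMod n) = -4,
    k = 5,
    n = 2 * k + 2]

def gpLinearCondition (n k : ℕ) : Fin 7 → Prop :=
  ![8 * k = n ∨ 8 * k = 3 * n,
    PmModLift n (5 * k) 1,
    PmModLift n (4 * k) 2,
    PmModLift n (3 * k) 3,
    PmModLift n (2 * k) 4,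
    k = 5,
    n = 2 * k + 2]

lemma gpLinearCondition_of_gpCondition {n k : ℕ} (hn : 4 < n) (hk : 2 * k < n) :
    {i | gpCondition n k i} ⊆ {i | gpLinearCondition n k i} := by
  intro i
  fin_cases i <;>
    simp only [Set.mem_ofPred_eq, gpCondition, gpLinearCondition, Fin.zero_eta, Fin.mk_one,
      Fin.reduceFinMk, Matrix.cons_val]
  all_goals first
    | exact id
    | exact fun h => pmModLift_of_natCast_eq_or_eq_neg (by omega) (by omega) (by exact_mod_cast h)

lemma gpLinearCondition_subsingleton {n k : ℕ} (hn : 80 < n) (hk : 2 * k < n) :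
    {i | gpLinearCondition n k i}.Subsingleton := by
  intro i hi j hj
  fin_cases i <;> fin_cases j <;>
    simp only [Set.mem_ofPred_eq, gpLinearCondition, PmModLift, Fin.zero_eta, Fin.mk_one,
      Fin.reduceFinMk, Matrix.cons_val] at hi hj <;>
    first | rfl | omega

theorem gp_conditions_at_most_one_general (n k : ℕ) (hn : 80 < n) (hk2 : 2 * k < n) :
    {i : Fin 7 | ![8 * k = n ∨ 8 * k = 3 * n,
        ((5 * k : ℕ) : ZMod n) = 1 ∨ ((5 * k : ℕ) : ZMod n) = -1,
        ((4 * k : ℕ) : ZMod n) = 2 ∨ ((4 * k : ℕ) : ZMod n) = -2,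
        ((3 * k : ℕ) : ZMod n) = 3 ∨ ((3 * k : ℕ) : ZMod n) = -3,
        ((2 * k : ℕ) : ZMod n) = 4 ∨ ((2 * k : ℕ) : ZMod n) = -4,
        k = 5,
        n = 2 * k + 2] i}.Subsingleton :=
  (gpLinearCondition_subsingleton hn hk2).anti (gpLinearCondition_of_gpCondition (by omega) hk2)

theorem gp_conditions_at_most_one (n k : ℕ) (hn : 80 < n) (hk1 : 1 ≤ k) (hk2 : 2 * k < n) :
    {i : Fin 7 | ![8 * k = n ∨ 8 * k = 3 * n,
        ((5 * k : ℕ) : ZMod n) = 1 ∨ ((5 * k : ℕ) : ZMod n) = -1,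
        ((4 * k : ℕ) : ZMod n) = 2 ∨ ((4 * k : ℕ) : ZMod n) = -2,
        ((3 * k : ℕ) : ZMod n) = 3 ∨ ((3 * k : ℕ) : ZMod n) = -3,
        ((2 * k : ℕ) : ZMod n) = 4 ∨ ((2 * k : ℕ) : ZMod n) = -4,
        k = 5,
        n = 2 * k + 2] i}.Subsingleton :=
  gp_conditions_at_most_one_general n k hn hk2
end
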